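/- Let α ∈ (0,1) ∪ (1,2), let ρ and σ be quantum states on ℂ^d with supp(ρ) = supp(σ), let ν > 0 and ε_V ≥ 0, and let m ≥ 1, t₁,…,t_m ∈ [0,1], w₁,…,w_m > 0 be such that h_m(x) := 1 + (sin(απ)/π)·Σ_{j=1}^m w_j f_{t_j}(x) satisfies |x^{1−α} − h_m(x)| ≤ |1−α|·α·ν·(x−1)²/x for all x > 0. Suppose real numbers D̂₁,…,D̂_m satisfy |D̂_j − D_{f_{t_j}}(ρ‖σ)| ≤ ε_V·|D_{f_{t_j}}(ρ‖σ)| for every j, and set Q̂_α(ρ‖σ) := 1 + (sin(απ)/π)·Σ_{j=1}^m w_j·D̂_j. Then |Q_α(ρ‖σ) − Q̂_α(ρ‖σ)| ≤ C₁·ν·(1+ε_V) + C₂·ε_V, where C₁ := 2·|α(1−α)|·(Q₂(ρ‖σ) − 1), C₂ := |Q_α(ρ‖σ) − 1|, Q_α(ρ‖σ) = tr[ρ^α σ^{1−α}] (matrix powers by functional calculus on the support), and Q₂(ρ‖σ) = tr[ρ² σ⁺] with σ⁺ the Moore–Penrose pseudo-inverse of σ. -/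

import Mathlib

/-!
For states with equal supports, `f ↦ D_f(ρ‖σ)` is a positive linear functional on functions
on `(0, ∞)`: a combination of the point evaluations at the ratios `μ_k / η_j` with weights
`η_j |⟨v_j, w_k⟩|² ≥ 0`. Equality of supports makes it normalised twice over,
`D_1 = tr ρ = 1` and `D_id = tr σ = 1`, and `Q_α`, `Q₂` are its values at `x^(1-α)` and `x⁻¹`.
Applying it to the pointwise approximation hypothesis gives
`|Q_α - (1 + c Σ w_j D_{f_{t_j}})| ≤ |1-α| α ν (Q₂ - 1)` with `c = sin(απ)/π`, since `(x-1)²/x`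
integrates to `Q₂ - 1`.
As `f_t(x) ≤ x - 1`, every `D_{f_t}` is nonpositive, so the relative errors of the `D̂_j` add up
to at most `ε_V |c Σ w_j D_{f_{t_j}}|`, and the triangle inequality bounds that sum by the
approximation error plus `|Q_α - 1|`.
-/

noncomputable section

namespace QRE

open scoped ComplexOrder

open Matrix

variable {d : ℕ}

/-- The rank-one projector `|u⟩⟨u|` associated with a vector `u ∈ ℂ^d`. -/
def rankOne (u : EuclideanSpace ℂ (Fin d)) : Matrix (Fin d) (Fin d) ℂ :=
  Matrix.of fun i j => u i * (starRingEnd ℂ) (u j)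

/-- Functional calculus on the support of a Hermitian matrix: apply `g` to the
positive eigenvalues, and `0` to the rest. -/
def matFun (g : ℝ → ℝ) {A : Matrix (Fin d) (Fin d) ℂ} (hA : A.IsHermitian) :
    Matrix (Fin d) (Fin d) ℂ :=
  ∑ j, (if 0 < hA.eigenvalues j then (g (hA.eigenvalues j) : ℂ) else 0) •
    rankOne (hA.eigenvectorBasis j)

/-- The orthogonal projection onto the support (column space) of a Hermitian matrix. -/
def suppProj {A : Matrix (Fin d) (Fin d) ℂ} (hA : A.IsHermitian) :
    Matrix (Fin d) (Fin d) ℂ :=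
  matFun (fun _ => 1) hA

/-- The standard quantum `f`-divergence (for `supp ρ ⊆ supp σ`, where the `f(0⁺)` term
vanishes): `D_f(ρ‖σ) = Σ_{j : η_j > 0} Σ_{k : μ_k > 0} η_j f(μ_k/η_j) tr[P_j Q_k]`. -/
def Df (f : ℝ → ℝ) {ρ σ : Matrix (Fin d) (Fin d) ℂ}
    (hρ : ρ.IsHermitian) (hσ : σ.IsHermitian) : ℝ :=
  ∑ j, ∑ k,
    if 0 < hρ.eigenvalues j ∧ 0 < hσ.eigenvalues k then
      hρ.eigenvalues j * f (hσ.eigenvalues k / hρ.eigenvalues j) *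
        (Matrix.trace (rankOne (hρ.eigenvectorBasis j) *
          rankOne (hσ.eigenvectorBasis k))).re
    else 0

/-- `f_t(x) = (x-1)/(t(x-1)+1)`. -/
def ft (t x : ℝ) : ℝ := (x - 1) / (t * (x - 1) + 1)

/-- A quantum state: positive semidefinite with unit trace. -/
def IsState (ρ : Matrix (Fin d) (Fin d) ℂ) : Prop := ρ.PosSemidef ∧ ρ.trace = 1

/-- The Umegaki relative entropy `tr[ρ (log₂ ρ − log₂ σ)]` (logs on the supports). -/
def relEnt {ρ σ : Matrix (Fin d) (Fin d) ℂ} (hρ : ρ.IsHermitian) (hσ : σ.IsHermitian) : ℝ :=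
  (Matrix.trace (ρ * (matFun (Real.logb 2) hρ - matFun (Real.logb 2) hσ))).re

/-- `Q_α(ρ‖σ) = tr[ρ^α σ^{1-α}]`, matrix powers by functional calculus on the support. -/
def Qalpha (α : ℝ) {ρ σ : Matrix (Fin d) (Fin d) ℂ}
    (hρ : ρ.IsHermitian) (hσ : σ.IsHermitian) : ℝ :=
  (Matrix.trace (matFun (fun y => y ^ α) hρ * matFun (fun y => y ^ (1 - α)) hσ)).re

/-- `Q₀(ρ‖σ) = tr[ρ⁰ σ]`. -/
def Qzero {ρ : Matrix (Fin d) (Fin d) ℂ} (hρ : ρ.IsHermitian)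
    (σ : Matrix (Fin d) (Fin d) ℂ) : ℝ :=
  (Matrix.trace (suppProj hρ * σ)).re

/-- `Q₂(ρ‖σ) = tr[ρ² σ⁺]`, with `σ⁺` the Moore–Penrose pseudo-inverse of `σ`. -/
def Qtwo (ρ : Matrix (Fin d) (Fin d) ℂ) {σ : Matrix (Fin d) (Fin d) ℂ}
    (hσ : σ.IsHermitian) : ℝ :=
  (Matrix.trace (ρ * ρ * matFun (fun y => y⁻¹) hσ)).re

open scoped InnerProductSpace

section RankOne

lemma rankOne_eq_vecMulVec (u : EuclideanSpace ℂ (Fin d)) :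
    rankOne u = vecMulVec (WithLp.ofLp u) (star (WithLp.ofLp u)) := rfl

lemma rankOne_mulVec (u : EuclideanSpace ℂ (Fin d)) (x : EuclideanSpace ℂ (Fin d)) :
    rankOne u *ᵥ WithLp.ofLp x = ⟪u, x⟫_ℂ • WithLp.ofLp u := by
  rw [rankOne_eq_vecMulVec, vecMulVec_mulVec, op_smul_eq_smul,
    EuclideanSpace.inner_eq_star_dotProduct, dotProduct_comm]

lemma trace_rankOne_mul_rankOne (u v : EuclideanSpace ℂ (Fin d)) :
    trace (rankOne u * rankOne v) = ((‖⟪u, v⟫_ℂ‖ ^ 2 : ℝ) : ℂ) := by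
  rw [rankOne_eq_vecMulVec, rankOne_eq_vecMulVec, vecMulVec_mul_vecMulVec, trace_vecMulVec,
    dotProduct_smul, smul_eq_mul, Complex.ofReal_pow, ← Complex.mul_conj',
    EuclideanSpace.inner_eq_star_dotProduct, dotProduct_comm]
  congr 1
  rw [starRingEnd_apply, dotProduct_star]

end RankOne

section MatFun

variable {A : Matrix (Fin d) (Fin d) ℂ}

lemma eq_of_mulVec_basis {ι : Type*} (b : Module.Basis ι ℂ (EuclideanSpace ℂ (Fin d)))
    {B C : Matrix (Fin d) (Fin d) ℂ} (h : ∀ j, B *ᵥ WithLp.ofLp (b j) = C *ᵥ WithLp.ofLp (b j)) :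
    B = C :=
  toEuclideanLin.injective <| b.ext fun j => by simp only [toLpLin_apply, h]

lemma matFun_mulVec_eigenvectorBasis (g : ℝ → ℝ) (hA : A.IsHermitian) (j : Fin d) :
    matFun g hA *ᵥ WithLp.ofLp (hA.eigenvectorBasis j) =
      (if 0 < hA.eigenvalues j then (g (hA.eigenvalues j) : ℂ) else 0) •
        WithLp.ofLp (hA.eigenvectorBasis j) := by
  simp only [matFun, sum_mulVec, smul_mulVec, rankOne_mulVec, hA.eigenvectorBasis.inner_eq_ite]
  simp only [ite_smul, one_smul, zero_smul, smul_ite, smul_zero, Finset.sum_ite_eq',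
    Finset.mem_univ, if_true]

lemma matFun_mul_matFun (g h : ℝ → ℝ) (hA : A.IsHermitian) :
    matFun g hA * matFun h hA = matFun (fun y => g y * h y) hA :=
  eq_of_mulVec_basis hA.eigenvectorBasis.toBasis fun j => by
    simp only [OrthonormalBasis.coe_toBasis, ← mulVec_mulVec, matFun_mulVec_eigenvectorBasis,
      mulVec_smul, smul_smul]
    split_ifs <;> push_cast <;> ring_nf

lemma matFun_id (hA : A.PosSemidef) : matFun id hA.1 = A :=
  eq_of_mulVec_basis hA.1.eigenvectorBasis.toBasis fun j => by
    rw [OrthonormalBasis.coe_toBasis, matFun_mulVec_eigenvectorBasis, hA.1.mulVec_eigenvectorBasis,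
      RCLike.real_smul_eq_coe_smul (K := ℂ)]
    split_ifs with hj
    · rfl
    · rw [(not_lt.mp hj).antisymm (hA.eigenvalues_nonneg j)]
      simp

lemma mul_self_eq_matFun (hA : A.PosSemidef) : A * A = matFun (fun y => y * y) hA.1 := by
  conv_lhs => rw [← matFun_id hA]
  exact matFun_mul_matFun _ _ _

end MatFun

section Divergence

variable {ρ σ : Matrix (Fin d) (Fin d) ℂ}

lemma trace_matFun_mul_matFun (g h : ℝ → ℝ) (hρ : ρ.IsHermitian) (hσ : σ.IsHermitian) :
    trace (matFun g hρ * matFun h hσ) =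
      ∑ j, ∑ k, (if 0 < hρ.eigenvalues j then (g (hρ.eigenvalues j) : ℂ) else 0) *
        (if 0 < hσ.eigenvalues k then (h (hσ.eigenvalues k) : ℂ) else 0) *
          ((‖⟪hρ.eigenvectorBasis j, hσ.eigenvectorBasis k⟫_ℂ‖ ^ 2 : ℝ) : ℂ) := by
  simp only [matFun, Finset.sum_mul_sum, smul_mul_smul_comm, trace_sum, trace_smul,
    trace_rankOne_mul_rankOne, smul_eq_mul]

lemma Df_eq_sum (f : ℝ → ℝ) (hρ : ρ.IsHermitian) (hσ : σ.IsHermitian) :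
    Df f hρ hσ = ∑ j, ∑ k, if 0 < hρ.eigenvalues j ∧ 0 < hσ.eigenvalues k then
      hρ.eigenvalues j * f (hσ.eigenvalues k / hρ.eigenvalues j) *
        ‖⟪hρ.eigenvectorBasis j, hσ.eigenvectorBasis k⟫_ℂ‖ ^ 2 else 0 := by
  simp only [Df, trace_rankOne_mul_rankOne, Complex.ofReal_re]

lemma re_trace_matFun_mul_matFun_eq_Df {g h f : ℝ → ℝ}
    (hgh : ∀ x y : ℝ, 0 < x → 0 < y → g x * h y = x * f (y / x))
    (hρ : ρ.IsHermitian) (hσ : σ.IsHermitian) :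
    (trace (matFun g hρ * matFun h hσ)).re = Df f hρ hσ := by
  rw [trace_matFun_mul_matFun, Df_eq_sum, Complex.re_sum]
  refine Finset.sum_congr rfl fun j _ => ?_
  rw [Complex.re_sum]
  refine Finset.sum_congr rfl fun k _ => ?_
  by_cases hjk : 0 < hρ.eigenvalues j ∧ 0 < hσ.eigenvalues k
  · rw [if_pos hjk.1, if_pos hjk.2, if_pos hjk, ← Complex.ofReal_mul, ← Complex.ofReal_mul,
      Complex.ofReal_re, hgh _ _ hjk.1 hjk.2]
  · rcases not_and_or.mp hjk with h | h <;> simp [h]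

lemma Df_swap (f : ℝ → ℝ) (hρ : ρ.IsHermitian) (hσ : σ.IsHermitian) :
    Df f hρ hσ = Df (fun x => x * f x⁻¹) hσ hρ := by
  rw [Df_eq_sum, Df_eq_sum, Finset.sum_comm]
  refine Finset.sum_congr rfl fun k _ => Finset.sum_congr rfl fun j _ => ?_
  by_cases h : 0 < hσ.eigenvalues k ∧ 0 < hρ.eigenvalues j
  · rw [if_pos h, if_pos h.symm, inv_div, norm_inner_symm]
    field_simp [h.1.ne', h.2.ne']
  · rw [if_neg h, if_neg (mt And.symm h)]

lemma Df_mono {f g : ℝ → ℝ} (hfg : ∀ x > 0, f x ≤ g x) (hρ : ρ.IsHermitian)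
    (hσ : σ.IsHermitian) : Df f hρ hσ ≤ Df g hρ hσ := by
  rw [Df_eq_sum, Df_eq_sum]
  refine Finset.sum_le_sum fun j _ => Finset.sum_le_sum fun k _ => ?_
  split_ifs with h
  · gcongr
    · exact h.1.le
    · exact hfg _ (div_pos h.2 h.1)
  · rfl

lemma Df_congr {f g : ℝ → ℝ} (hfg : ∀ x > 0, f x = g x) (hρ : ρ.IsHermitian)
    (hσ : σ.IsHermitian) : Df f hρ hσ = Df g hρ hσ :=
  le_antisymm (Df_mono (fun x hx => (hfg x hx).le) _ _) (Df_mono (fun x hx => (hfg x hx).ge) _ _)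

def dfLinearMap (hρ : ρ.IsHermitian) (hσ : σ.IsHermitian) : (ℝ → ℝ) →ₗ[ℝ] ℝ where
  toFun f := Df f hρ hσ
  map_add' f g := by
    simp only [Df, Pi.add_apply, ← Finset.sum_add_distrib]
    refine Finset.sum_congr rfl fun j _ => Finset.sum_congr rfl fun k _ => ?_
    split_ifs <;> ring
  map_smul' c f := by
    simp only [Df, Pi.smul_apply, smul_eq_mul, RingHom.id_apply, Finset.mul_sum]
    refine Finset.sum_congr rfl fun j _ => Finset.sum_congr rfl fun k _ => ?_
    split_ifs <;> ring

lemma inner_eq_zero_of_mulVec_eq_zero (hσ : σ.IsHermitian) {x y : EuclideanSpace ℂ (Fin d)}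
    (hx : σ *ᵥ WithLp.ofLp x = 0) (hy : WithLp.ofLp y ∈ LinearMap.range σ.mulVecLin) :
    ⟪x, y⟫_ℂ = 0 := by
  obtain ⟨z, hz⟩ := hy
  have hsymm := isSymmetric_toEuclideanLin_iff.mpr hσ x (WithLp.toLp 2 z)
  simp only [toLpLin_apply, hx, WithLp.toLp_zero, inner_zero_left] at hsymm
  rw [hsymm]
  congr
  exact (congrArg (WithLp.toLp 2) hz).symm

lemma mem_range_of_eigenvalue_ne_zero (hσ : σ.IsHermitian) {k : Fin d}
    (hk : hσ.eigenvalues k ≠ 0) :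
    WithLp.ofLp (hσ.eigenvectorBasis k) ∈ LinearMap.range σ.mulVecLin :=
  ⟨((hσ.eigenvalues k : ℂ)⁻¹) • WithLp.ofLp (hσ.eigenvectorBasis k), by
    rw [mulVecLin_apply, mulVec_smul, hσ.mulVec_eigenvectorBasis,
      ← Complex.coe_smul, smul_smul, inv_mul_cancel₀ (Complex.ofReal_ne_zero.mpr hk),
      one_smul]⟩

lemma sum_norm_inner_sq_of_mem_range (hσ : σ.PosSemidef) {u : EuclideanSpace ℂ (Fin d)}
    (hu : WithLp.ofLp u ∈ LinearMap.range σ.mulVecLin) :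
    ∑ k, (if 0 < hσ.1.eigenvalues k then ‖⟪u, hσ.1.eigenvectorBasis k⟫_ℂ‖ ^ 2 else 0) =
      ‖u‖ ^ 2 := by
  rw [← hσ.1.eigenvectorBasis.sum_sq_norm_inner_left u]
  refine Finset.sum_congr rfl fun k _ => ?_
  split_ifs with hk
  · rfl
  · have hker : σ *ᵥ WithLp.ofLp (hσ.1.eigenvectorBasis k) = 0 := by
      rw [hσ.1.mulVec_eigenvectorBasis, (not_lt.mp hk).antisymm (hσ.eigenvalues_nonneg k),
        zero_smul]
    rw [inner_eq_zero_symm.mp (inner_eq_zero_of_mulVec_eq_zero hσ.1 hker hu), norm_zero]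
    simp

lemma Df_one (hρ : ρ.PosSemidef) (hσ : σ.PosSemidef)
    (hsupp : LinearMap.range ρ.mulVecLin ≤ LinearMap.range σ.mulVecLin) :
    Df 1 hρ.1 hσ.1 = (trace ρ).re := by
  rw [Df_eq_sum, hρ.1.trace_eq_sum_eigenvalues, Complex.re_sum]
  refine Finset.sum_congr rfl fun j _ => ?_
  by_cases hj : 0 < hρ.1.eigenvalues j
  · have hrow := sum_norm_inner_sq_of_mem_range hσ
      (hsupp (mem_range_of_eigenvalue_ne_zero hρ.1 hj.ne'))
    rw [hρ.1.eigenvectorBasis.orthonormal.1 j, one_pow] at hrow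
    simp only [hj, true_and, Pi.one_apply, mul_one, ← mul_ite_zero, ← Finset.mul_sum, hrow]
    exact (Complex.ofReal_re _).symm
  · simp [(not_lt.mp hj).antisymm (hρ.eigenvalues_nonneg j)]

lemma Df_id (hρ : ρ.PosSemidef) (hσ : σ.PosSemidef)
    (hsupp : LinearMap.range σ.mulVecLin ≤ LinearMap.range ρ.mulVecLin) :
    Df id hρ.1 hσ.1 = (trace σ).re := by
  rw [Df_swap, ← Df_one hσ hρ hsupp]
  exact Df_congr (fun x hx => mul_inv_cancel₀ hx.ne') _ _

lemma Qalpha_eq_Df (α : ℝ) (hρ : ρ.IsHermitian) (hσ : σ.IsHermitian) :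
    Qalpha α hρ hσ = Df (fun x => x ^ (1 - α)) hρ hσ :=
  re_trace_matFun_mul_matFun_eq_Df (fun x y hx hy => by
    rw [Real.div_rpow hy.le hx.le, Real.rpow_sub hx, Real.rpow_one]
    field_simp) hρ hσ

lemma Qtwo_eq_Df (hρ : ρ.PosSemidef) (hσ : σ.IsHermitian) :
    Qtwo ρ hσ = Df (fun x => x⁻¹) hρ.1 hσ := by
  rw [Qtwo, mul_self_eq_matFun hρ]
  exact re_trace_matFun_mul_matFun_eq_Df (fun x y hx hy => by field_simp) _ _

end Divergence

lemma ft_le_sub_one {t x : ℝ} (ht : t ∈ Set.Icc (0 : ℝ) 1) (hx : 0 < x) : ft t x ≤ x - 1 := by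
  have hden : 0 < t * (x - 1) + 1 := by
    rcases le_total x 1 with h | h
    · nlinarith [mul_nonneg (sub_nonneg.2 ht.2) (sub_nonneg.2 h)]
    · nlinarith [mul_nonneg ht.1 (sub_nonneg.2 h)]
  rw [ft, div_le_iff₀ hden]
  nlinarith [mul_nonneg ht.1 (sq_nonneg (x - 1))]

lemma abs_sum_sub_sum_le_mul_abs_sum {ι : Type*} [Fintype ι] {ε : ℝ} {w D Dhat : ι → ℝ}
    (hw : ∀ j, 0 ≤ w j) (hD : ∀ j, D j ≤ 0) (hest : ∀ j, |Dhat j - D j| ≤ ε * |D j|) :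
    |∑ j, w j * Dhat j - ∑ j, w j * D j| ≤ ε * |∑ j, w j * D j| := by
  have hsum_nonpos : ∑ j, w j * D j ≤ 0 :=
    Finset.sum_nonpos fun j _ => mul_nonpos_of_nonneg_of_nonpos (hw j) (hD j)
  calc |∑ j, w j * Dhat j - ∑ j, w j * D j| = |∑ j, w j * (Dhat j - D j)| := by
        simp only [mul_sub, Finset.sum_sub_distrib]
    _ ≤ ∑ j, w j * (ε * -D j) := by
        refine (Finset.abs_sum_le_sum_abs _ _).trans (Finset.sum_le_sum fun j _ => ?_)
        rw [abs_mul, abs_of_nonneg (hw j), ← abs_of_nonpos (hD j)]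
        exact mul_le_mul_of_nonneg_left (hest j) (hw j)
    _ = ε * |∑ j, w j * D j| := by
        rw [abs_of_nonpos hsum_nonpos, ← Finset.sum_neg_distrib, Finset.mul_sum]
        exact Finset.sum_congr rfl fun j _ => by ring

lemma abs_sub_one_add_mul_sum_le {ι : Type*} [Fintype ι] {Q c K ε : ℝ} {w D Dhat : ι → ℝ}
    (hw : ∀ j, 0 ≤ w j) (hD : ∀ j, D j ≤ 0) (hε : 0 ≤ ε)
    (hest : ∀ j, |Dhat j - D j| ≤ ε * |D j|)
    (hK : |Q - (1 + c * ∑ j, w j * D j)| ≤ K) :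
    |Q - (1 + c * ∑ j, w j * Dhat j)| ≤ K + ε * (K + |Q - 1|) := by
  set S := ∑ j, w j * D j
  have hcS : |c * S| ≤ K + |Q - 1| := by
    calc |c * S| = |(Q - 1) - (Q - (1 + c * S))| := by ring_nf
      _ ≤ |Q - 1| + |Q - (1 + c * S)| := abs_sub _ _
      _ ≤ K + |Q - 1| := by linarith
  calc |Q - (1 + c * ∑ j, w j * Dhat j)|
      = |(Q - (1 + c * S)) - c * (∑ j, w j * Dhat j - S)| := by ring_nf
    _ ≤ K + |c| * (ε * |S|) := by
        refine (abs_sub _ _).trans (add_le_add hK ?_)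
        rw [abs_mul]
        exact mul_le_mul_of_nonneg_left (abs_sum_sub_sum_le_mul_abs_sum hw hD hest) (abs_nonneg c)
    _ = K + ε * |c * S| := by rw [abs_mul]; ring
    _ ≤ K + ε * (K + |Q - 1|) := by gcongr

section PositiveFunctional

variable (D : (ℝ → ℝ) →ₗ[ℝ] ℝ)

lemma map_eq_of_forall_pos (hmono : ∀ f g : ℝ → ℝ, (∀ x > 0, f x ≤ g x) → D f ≤ D g)
    {f g : ℝ → ℝ} (h : ∀ x > 0, f x = g x) : D f = D g :=
  le_antisymm (hmono _ _ fun x hx => (h x hx).le) (hmono _ _ fun x hx => (h x hx).ge)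

lemma abs_map_sub_map_le (hmono : ∀ f g : ℝ → ℝ, (∀ x > 0, f x ≤ g x) → D f ≤ D g)
    {f g q : ℝ → ℝ} {K : ℝ} (h : ∀ x > 0, |f x - g x| ≤ K * q x) :
    |D f - D g| ≤ K * D q := by
  rw [← map_sub, ← smul_eq_mul, ← map_smul, abs_le, ← map_neg]
  exact ⟨hmono _ _ fun x hx => neg_le_of_abs_le (h x hx), hmono _ _ fun x hx => le_of_abs_le (h x hx)⟩

lemma map_one_add_mul_sum (hD1 : D 1 = 1) {ι : Type*} [Fintype ι] (c : ℝ) (w : ι → ℝ)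
    (g : ι → ℝ → ℝ) :
    D (fun x => 1 + c * ∑ j, w j * g j x) = 1 + c * ∑ j, w j * D (g j) := by
  have hfun : (fun x => 1 + c * ∑ j, w j * g j x) = 1 + c • ∑ j, w j • g j := by
    ext x
    simp [Finset.sum_apply]
  simp [hfun, map_sum, hD1]

lemma map_sq_sub_one_div (hmono : ∀ f g : ℝ → ℝ, (∀ x > 0, f x ≤ g x) → D f ≤ D g)
    (hD1 : D 1 = 1) (hDid : D id = 1) :
    D (fun x => (x - 1) ^ 2 / x) = D (fun x => x⁻¹) - 1 := by
  have hfun : D (fun x => (x - 1) ^ 2 / x) = D ((fun x => x⁻¹) + id - (2 : ℝ) • 1) :=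
    map_eq_of_forall_pos D hmono fun x hx => by
      simp only [Pi.add_apply, Pi.sub_apply, Pi.smul_apply, id, Pi.one_apply, smul_eq_mul]
      field_simp
      ring
  rw [hfun, map_sub, map_add, map_smul, hD1, hDid, smul_eq_mul]
  ring

lemma map_ft_nonpos (hmono : ∀ f g : ℝ → ℝ, (∀ x > 0, f x ≤ g x) → D f ≤ D g)
    (hD1 : D 1 = 1) (hDid : D id = 1) {t : ℝ} (ht : t ∈ Set.Icc (0 : ℝ) 1) : D (ft t) ≤ 0 :=
  calc D (ft t) ≤ D (id - 1) := hmono _ _ fun _ hx => ft_le_sub_one ht hx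
    _ = 0 := by rw [map_sub, hDid, hD1, sub_self]

end PositiveFunctional

theorem error_bound_Qalpha_general (α : ℝ)
    (hα : α ∈ Set.Ioo (0 : ℝ) 1 ∪ Set.Ioo (1 : ℝ) 2)
    (ρ σ : Matrix (Fin d) (Fin d) ℂ) (hρ : IsState ρ) (hσ : IsState σ)
    (hsupp : LinearMap.range ρ.mulVecLin = LinearMap.range σ.mulVecLin)
    (ν : ℝ) (εV : ℝ) (hεV : 0 ≤ εV)
    (m : ℕ) (t w : Fin m → ℝ)
    (ht : ∀ j, t j ∈ Set.Icc (0 : ℝ) 1) (hw : ∀ j, 0 < w j)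
    (happrox : ∀ x > (0 : ℝ),
      |x ^ (1 - α) -
          (1 + (Real.sin (α * Real.pi) / Real.pi) * ∑ j, w j * ft (t j) x)| ≤
        |1 - α| * α * ν * (x - 1) ^ 2 / x)
    (Dhat : Fin m → ℝ)
    (hest : ∀ j, |Dhat j - Df (ft (t j)) hρ.1.1 hσ.1.1| ≤
      εV * |Df (ft (t j)) hρ.1.1 hσ.1.1|) :
    |Qalpha α hρ.1.1 hσ.1.1 -
        (1 + (Real.sin (α * Real.pi) / Real.pi) * ∑ j, w j * Dhat j)| ≤
      (2 * |α * (1 - α)| * (Qtwo ρ hσ.1.1 - 1)) * ν * (1 + εV) +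
        |Qalpha α hρ.1.1 hσ.1.1 - 1| * εV := by
  set D := dfLinearMap hρ.1.1 hσ.1.1
  set c := Real.sin (α * Real.pi) / Real.pi
  have hmono : ∀ f g : ℝ → ℝ, (∀ x > 0, f x ≤ g x) → D f ≤ D g := fun _ _ h => Df_mono h _ _
  have hD1 : D 1 = 1 := (Df_one hρ.1 hσ.1 hsupp.le).trans (by simp [hρ.2])
  have hDid : D id = 1 := (Df_id hρ.1 hσ.1 hsupp.ge).trans (by simp [hσ.2])
  have hK : |D (fun x => x ^ (1 - α)) - (1 + c * ∑ j, w j * D (ft (t j)))| ≤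
      |1 - α| * α * ν * D (fun x => (x - 1) ^ 2 / x) := by
    rw [← map_one_add_mul_sum D hD1]
    exact abs_map_sub_map_le D hmono fun x hx => (happrox x hx).trans_eq (mul_div_assoc _ _ _)
  have hα0 : 0 < α := by rcases hα with h | h <;> linarith [h.1]
  have hQα : Qalpha α hρ.1.1 hσ.1.1 = D (fun x => x ^ (1 - α)) := Qalpha_eq_Df _ _ _
  have hQ2 : Qtwo ρ hσ.1.1 - 1 = D (fun x => (x - 1) ^ 2 / x) := by
    rw [map_sq_sub_one_div D hmono hD1 hDid, Qtwo_eq_Df hρ.1]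
    rfl
  rw [hQα, hQ2, abs_mul, abs_of_pos hα0]
  refine (abs_sub_one_add_mul_sum_le (fun j => (hw j).le)
    (fun j => map_ft_nonpos D hmono hD1 hDid (ht j)) hεV hest hK).trans ?_
  have hK0 := (abs_nonneg _).trans hK
  linarith [mul_nonneg hK0 hεV]

/-- Error bound for estimating the quasi-relative entropy (Lemma 4):
`|Q_α(ρ‖σ) − Q̂_α(ρ‖σ)| ≤ C₁ ν (1+ε_V) + C₂ ε_V` with
`C₁ = 2|α(1−α)|(Q₂(ρ‖σ) − 1)` and `C₂ = |Q_α(ρ‖σ) − 1|`. -/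
theorem error_bound_Qalpha (α : ℝ)
    (hα : α ∈ Set.Ioo (0 : ℝ) 1 ∪ Set.Ioo (1 : ℝ) 2)
    (ρ σ : Matrix (Fin d) (Fin d) ℂ) (hρ : IsState ρ) (hσ : IsState σ)
    (hsupp : LinearMap.range ρ.mulVecLin = LinearMap.range σ.mulVecLin)
    (ν : ℝ) (hν : 0 < ν) (εV : ℝ) (hεV : 0 ≤ εV)
    (m : ℕ) (hm : 1 ≤ m) (t w : Fin m → ℝ)
    (ht : ∀ j, t j ∈ Set.Icc (0 : ℝ) 1) (hw : ∀ j, 0 < w j)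
    (happrox : ∀ x > (0 : ℝ),
      |x ^ (1 - α) -
          (1 + (Real.sin (α * Real.pi) / Real.pi) * ∑ j, w j * ft (t j) x)| ≤
        |1 - α| * α * ν * (x - 1) ^ 2 / x)
    (Dhat : Fin m → ℝ)
    (hest : ∀ j, |Dhat j - Df (ft (t j)) hρ.1.1 hσ.1.1| ≤
      εV * |Df (ft (t j)) hρ.1.1 hσ.1.1|) :
    |Qalpha α hρ.1.1 hσ.1.1 -
        (1 + (Real.sin (α * Real.pi) / Real.pi) * ∑ j, w j * Dhat j)| ≤
      (2 * |α * (1 - α)| * (Qtwo ρ hσ.1.1 - 1)) * ν * (1 + εV) +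
        |Qalpha α hρ.1.1 hσ.1.1 - 1| * εV :=
  error_bound_Qalpha_general α hα ρ σ hρ hσ hsupp ν εV hεV m t w ht hw happrox Dhat hest

end QRE
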